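/- arXiv:2105.01758 — 4 statements merged into one kernel-verified Lean document; each statement's English description precedes it below -/
import Mathlib

section
/- For every positive integer k and every partition λ with smallest part equal to 1, if λ' is obtained from λ by deleting all parts of size at most k, then μ_k(λ) = μ_k(λ') + 1. -/
/-- The `k`-measure of a multiset of parts: the length of the longest subsequence
of parts in which any two consecutive members differ by at least `k`. -/
noncomputable def kMeasure (k : ℕ) (P : Multiset ℕ) : ℕ :=
  sSup {n | ∃ f : Fin n → ℕ, (∀ i, f i ∈ P) ∧
    ∀ i j : Fin n, (i : ℕ) + 1 = (j : ℕ) → f i + k ≤ f j}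

lemma chain_le_aux {n k m : ℕ} (hk : 0 < k) (lam : Nat.Partition n)
    (f : Fin m → ℕ) (hf : ∀ i, f i ∈ lam.parts)
    (hc : ∀ i j : Fin m, (i : ℕ) + 1 = (j : ℕ) → f i + k ≤ f j) : m ≤ n := by
  have key : ∀ t, ∀ i : Fin m, (i : ℕ) = t → t + 1 ≤ f i := by
    intro t
    induction t with
    | zero => intro i _; exact lam.parts_pos (hf i)
    | succ t ih =>
      intro i hi
      have ht : t < m := by omega
      have h1 := ih ⟨t, ht⟩ rfl
      have h2 := hc ⟨t, ht⟩ i (by simp [hi])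
      omega
  rcases Nat.eq_zero_or_pos m with hm | hm
  · omega
  · have h1 := key (m - 1) ⟨m - 1, by omega⟩ rfl
    have h2 : f ⟨m - 1, by omega⟩ ≤ lam.parts.sum :=
      Multiset.single_le_sum (fun x _ => Nat.zero_le x) _ (hf _)
    rw [lam.parts_sum] at h2
    omega

/-- Deleting all parts of size at most `k` from a partition whose smallest part is `1`
decreases the `k`-measure by exactly one. -/
theorem kMeasure_delete_small_parts {n : ℕ} (k : ℕ) (hk : 0 < k)
    (lam : Nat.Partition n) (h1 : 1 ∈ lam.parts) :
    kMeasure k lam.parts = kMeasure k (lam.parts.filter (fun p => k < p)) + 1 := by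
  classical
  set P := lam.parts with hP
  set Q := lam.parts.filter (fun p => k < p) with hQ
  set S : Set ℕ := {m | ∃ f : Fin m → ℕ, (∀ i, f i ∈ P) ∧
    ∀ i j : Fin m, (i : ℕ) + 1 = (j : ℕ) → f i + k ≤ f j} with hS
  set S' : Set ℕ := {m | ∃ f : Fin m → ℕ, (∀ i, f i ∈ Q) ∧
    ∀ i j : Fin m, (i : ℕ) + 1 = (j : ℕ) → f i + k ≤ f j} with hS'
  have hQP : ∀ x, x ∈ Q → x ∈ P := fun x hx => (Multiset.mem_filter.mp hx).1
  have hQk : ∀ x, x ∈ Q → k < x := fun x hx => (Multiset.mem_filter.mp hx).2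
  have h0S : (0 : ℕ) ∈ S := ⟨Fin.elim0, fun i => i.elim0, fun i => i.elim0⟩
  have h0S' : (0 : ℕ) ∈ S' := ⟨Fin.elim0, fun i => i.elim0, fun i => i.elim0⟩
  have hbS : BddAbove S := by
    refine ⟨n, fun m hm => ?_⟩
    obtain ⟨f, hf, hc⟩ := hm
    exact chain_le_aux hk lam f hf hc
  have hbS' : BddAbove S' := by
    refine ⟨n, fun m hm => ?_⟩
    obtain ⟨f, hf, hc⟩ := hm
    exact chain_le_aux hk lam f (fun i => hQP _ (hf i)) hc
  have hM : kMeasure k P = sSup S := rfl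
  have hM' : kMeasure k Q = sSup S' := rfl
  rw [hM, hM']
  apply le_antisymm
  · -- sSup S ≤ sSup S' + 1
    apply csSup_le ⟨0, h0S⟩
    intro m hm
    obtain ⟨f, hf, hc⟩ := hm
    rcases Nat.eq_zero_or_pos m with hm0 | hm0
    · omega
    · have hmem : m - 1 ∈ S' := by
        refine ⟨fun i => f ⟨(i : ℕ) + 1, by omega⟩, ?_, ?_⟩
        · intro i
          have hpos : 1 ≤ f ⟨(i : ℕ), by omega⟩ :=
            lam.parts_pos (hf ⟨(i : ℕ), by omega⟩)
          have hstep := hc ⟨(i : ℕ), by omega⟩ ⟨(i : ℕ) + 1, by omega⟩ rfl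
          refine Multiset.mem_filter.mpr ⟨hf _, ?_⟩
          beta_reduce
          omega
        · intro i j hij
          exact hc ⟨(i : ℕ) + 1, by omega⟩ ⟨(j : ℕ) + 1, by omega⟩ (by simp; omega)
      have := le_csSup hbS' hmem
      omega
  · -- sSup S' + 1 ≤ sSup S
    have hmem' : sSup S' ∈ S' := Nat.sSup_mem ⟨0, h0S'⟩ hbS'
    obtain ⟨f, hf, hc⟩ := hmem'
    have hmem : sSup S' + 1 ∈ S := by
      refine ⟨fun i => if h : (i : ℕ) < 1 then 1 else f ⟨(i : ℕ) - 1, by omega⟩, ?_, ?_⟩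
      · intro i
        by_cases h : (i : ℕ) < 1
        · simpa [h] using h1
        · simp only [h, dif_neg, not_false_iff]
          exact hQP _ (hf _)
      · intro i j hij
        by_cases h : (i : ℕ) < 1
        · have hi0 : (i : ℕ) = 0 := by omega
          have hj1 : (j : ℕ) = 1 := by omega
          have hj : ¬ ((j : ℕ) < 1) := by omega
          simp only [h, hj, dif_pos, dif_neg, not_false_iff]
          have := hQk _ (hf ⟨(j : ℕ) - 1, by omega⟩)
          omega
        · have hj : ¬ ((j : ℕ) < 1) := by omega
          simp only [h, hj, dif_neg, not_false_iff]
          exact hc ⟨(i : ℕ) - 1, by omega⟩ ⟨(j : ℕ) - 1, by omega⟩ (by simp; omega)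
    exact le_csSup hbS hmem
end

section
/- For |q|<1 and |z|<1: (z;q)_∞ Σ_{n≥0} z^n / ((q;q)_n (yq;q)_n) = Σ_{n≥0} y^n z^n q^{n²} / ((yq;q)_n (q;q)_n). -/
open scoped BigOperators

/-!
Euler's expansion `(z;q)_∞ = ∑ₖ (-1)ᵏ q^(k(k-1)/2) zᵏ / (q;q)ₖ`, obtained by iterating
`A(z) = (1 - z) A(qz)` and letting `qᴺz → 0`, makes the left side the Cauchy product `F = A H`
with `H(z) = ∑ zⁿ / ((q;q)ₙ (yq;q)ₙ)`. As formal power series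
`(1 - z) H(z) = (1 + y) H(qz) - y H(q²z)`, so `F(z) = (1 + y) F(qz) - y (1 - qz) F(q²z)`.
On coefficients this is the recursion `Fₙ (1 - qⁿ) (1 - yqⁿ) = y q^(2n-1) Fₙ₋₁`, which the
right-hand coefficients `yⁿ q^(n²) / ((q;q)ₙ (yq;q)ₙ)` satisfy too.
-/

namespace HeineLimit

open Finset PowerSeries

variable {K : Type*} [Field K]

/-- `qPoch x q n` is `(xq;q)_n`, so that `(q;q)_n = qPoch 1 q n`. -/
def qPoch (x q : K) (n : ℕ) : K := ∏ j ∈ range n, (1 - x * q ^ (j + 1))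

def eulerCoeff (q : K) (k : ℕ) : K := (-1) ^ k * q ^ k.choose 2 / qPoch 1 q k

def heineCoeff (y q : K) (n : ℕ) : K := (qPoch 1 q n * qPoch y q n)⁻¹

variable {y q : K} {k : ℕ}

lemma qPoch_succ (x q : K) (n : ℕ) : qPoch x q (n + 1) = qPoch x q n * (1 - x * q ^ (n + 1)) :=
  prod_range_succ _ _

lemma eulerCoeff_zero (q : K) : eulerCoeff q 0 = 1 := by simp [eulerCoeff, qPoch]

lemma eulerCoeff_succ (q : K) (k : ℕ) :
    eulerCoeff q (k + 1) = eulerCoeff q k * (-q ^ k / (1 - q ^ (k + 1))) := by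
  simp only [eulerCoeff, qPoch_succ, one_mul, Nat.choose_succ_succ', Nat.choose_one_right]
  rw [pow_succ, pow_add, div_mul_div_comm]
  ring

lemma eulerCoeff_succ_mul_one_sub (hq : q ^ (k + 1) ≠ 1) :
    eulerCoeff q (k + 1) * (1 - q ^ (k + 1)) = -(q ^ k * eulerCoeff q k) := by
  rw [eulerCoeff_succ, mul_assoc, div_mul_cancel₀ _ (sub_ne_zero.2 hq.symm)]
  ring

lemma heineCoeff_zero (y q : K) : heineCoeff y q 0 = 1 := by simp [heineCoeff, qPoch]

lemma heineCoeff_succ (y q : K) (n : ℕ) :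
    heineCoeff y q (n + 1) = heineCoeff y q n / ((1 - q ^ (n + 1)) * (1 - y * q ^ (n + 1))) := by
  simp only [heineCoeff, qPoch_succ, one_mul, div_eq_mul_inv, ← mul_inv]
  ring

def eulerSeries (q : K) : K⟦X⟧ := mk (eulerCoeff q)

def heineSeries (y q : K) : K⟦X⟧ := mk (heineCoeff y q)

lemma one_sub_X_ne_zero : (1 - X : K⟦X⟧) ≠ 0 := fun h => by
  simpa using congrArg constantCoeff h

lemma one_sub_X_mul_rescale_eulerSeries (hq : ∀ n, q ^ (n + 1) ≠ 1) :
    (1 - X) * rescale q (eulerSeries q) = eulerSeries q := by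
  ext (_ | n)
  · simp only [eulerSeries, sub_mul, one_mul, map_sub, coeff_zero_X_mul, coeff_rescale, coeff_mk,
      pow_zero, sub_zero]
  · simp only [eulerSeries, sub_mul, one_mul, map_sub, coeff_succ_X_mul, coeff_rescale, coeff_mk]
    linear_combination -eulerCoeff_succ_mul_one_sub (hq n)

lemma one_sub_X_mul_heineSeries (hq : ∀ n, q ^ (n + 1) ≠ 1) (hy : ∀ n, y * q ^ (n + 1) ≠ 1) :
    (1 - X) * heineSeries y q =
      C (1 + y) * rescale q (heineSeries y q) - C y * rescale (q ^ 2) (heineSeries y q) := by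
  ext (_ | n)
  · simp only [heineSeries, sub_mul, one_mul, map_sub, coeff_zero_X_mul, coeff_rescale, coeff_mk,
      coeff_C_mul, pow_zero, sub_zero]
    ring
  · have hqn : 1 - q ^ (n + 1) ≠ 0 := sub_ne_zero.2 (hq n).symm
    have hyn : 1 - y * q ^ (n + 1) ≠ 0 := sub_ne_zero.2 (hy n).symm
    simp only [heineSeries, sub_mul, one_mul, map_sub, coeff_succ_X_mul, coeff_rescale, coeff_mk,
      coeff_C_mul, heineCoeff_succ]
    field_simp
    ring

lemma eulerSeries_mul_heineSeries_eq (hq : ∀ n, q ^ (n + 1) ≠ 1) (hy : ∀ n, y * q ^ (n + 1) ≠ 1) :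
    eulerSeries q * heineSeries y q =
      C (1 + y) * rescale q (eulerSeries q * heineSeries y q) -
        C y * (1 - C q * X) * rescale (q ^ 2) (eulerSeries q * heineSeries y q) := by
  have hA := one_sub_X_mul_rescale_eulerSeries hq
  have hAq : (1 - C q * X) * rescale (q ^ 2) (eulerSeries q) = rescale q (eulerSeries q) := by
    simpa [rescale_rescale, sq] using congrArg (rescale q) hA
  have hH := one_sub_X_mul_heineSeries hq hy
  refine mul_left_cancel₀ one_sub_X_ne_zero ?_
  simp only [map_mul]
  linear_combination eulerSeries q * hH
    - (C (1 + y) * rescale q (heineSeries y q) - C y * rescale (q ^ 2) (heineSeries y q)) * hA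
    + (1 - X) * C y * rescale (q ^ 2) (heineSeries y q) * hAq

lemma coeff_succ_eulerSeries_mul_heineSeries (hq : ∀ n, q ^ (n + 1) ≠ 1)
    (hy : ∀ n, y * q ^ (n + 1) ≠ 1) (n : ℕ) :
    coeff (n + 1) (eulerSeries q * heineSeries y q) * ((1 - q ^ (n + 1)) * (1 - y * q ^ (n + 1))) =
      y * q ^ (2 * n + 1) * coeff n (eulerSeries q * heineSeries y q) := by
  have h := congrArg (coeff (n + 1)) (eulerSeries_mul_heineSeries_eq hq hy)
  simp only [mul_sub, sub_mul, mul_one, mul_assoc, map_sub, coeff_C_mul, coeff_succ_X_mul,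
    coeff_rescale] at h
  linear_combination h

lemma coeff_eulerSeries_mul_heineSeries (hq : ∀ n, q ^ (n + 1) ≠ 1)
    (hy : ∀ n, y * q ^ (n + 1) ≠ 1) (n : ℕ) :
    coeff n (eulerSeries q * heineSeries y q) = y ^ n * q ^ (n ^ 2) * heineCoeff y q n := by
  induction n with
  | zero => simp [eulerSeries, heineSeries, coeff_mul, eulerCoeff_zero, heineCoeff_zero]
  | succ n ih =>
    have hd : (1 - q ^ (n + 1)) * (1 - y * q ^ (n + 1)) ≠ 0 :=
      mul_ne_zero (sub_ne_zero.2 (hq n).symm) (sub_ne_zero.2 (hy n).symm)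
    refine mul_right_cancel₀ hd ?_
    rw [coeff_succ_eulerSeries_mul_heineSeries hq hy, ih, heineCoeff_succ, mul_div_assoc',
      div_mul_cancel₀ _ hd]
    ring

section Analytic

open Filter Topology

lemma summable_norm_of_ratio_tendsto {𝕜 : Type*} [NormedField 𝕜] {f ρ : ℕ → 𝕜} {L : 𝕜}
    (hL : ‖L‖ < 1) (hρ : Tendsto ρ atTop (𝓝 L)) (hf : ∀ n, f (n + 1) = f n * ρ n) :
    Summable fun n => ‖f n‖ := by
  obtain ⟨r, hLr, hr⟩ := exists_between hL
  refine summable_of_ratio_norm_eventually_le hr ?_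
  filter_upwards [hρ.norm.eventually (gt_mem_nhds hLr)] with n hn
  rw [norm_norm, norm_norm, hf, norm_mul, mul_comm]
  exact mul_le_mul_of_nonneg_right hn.le (norm_nonneg _)

variable {𝕜 : Type*} [NormedField 𝕜] {x y q z : 𝕜}

lemma mul_pow_succ_ne_one (hx : ‖x‖ ≤ 1) (hq : ‖q‖ < 1) (n : ℕ) : x * q ^ (n + 1) ≠ 1 := by
  refine ne_of_apply_ne norm (ne_of_lt ?_)
  calc ‖x * q ^ (n + 1)‖ ≤ 1 * ‖q‖ ^ (n + 1) := by rw [norm_mul, norm_pow]; gcongr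
    _ < 1 := by rw [one_mul]; exact pow_lt_one₀ (norm_nonneg _) hq n.succ_ne_zero
    _ = ‖(1 : 𝕜)‖ := norm_one.symm

lemma pow_succ_ne_one (hq : ‖q‖ < 1) (n : ℕ) : q ^ (n + 1) ≠ 1 := by
  simpa using mul_pow_succ_ne_one (x := 1) (by simp) hq n

lemma tendsto_one_sub_mul_pow_succ (hq : ‖q‖ < 1) (x : 𝕜) :
    Tendsto (fun n => 1 - x * q ^ (n + 1)) atTop (𝓝 1) := by
  simpa using tendsto_const_nhds.sub (((tendsto_pow_atTop_nhds_zero_of_norm_lt_one hq).comp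
    (tendsto_add_atTop_nat 1)).const_mul x)

lemma summable_norm_eulerCoeff_mul_pow (hq : ‖q‖ < 1) (w : 𝕜) :
    Summable fun k => ‖eulerCoeff q k * w ^ k‖ := by
  refine summable_norm_of_ratio_tendsto (ρ := fun k => -q ^ k / (1 - q ^ (k + 1)) * w)
    (L := 0) (by simp) ?_ fun k => by rw [eulerCoeff_succ, pow_succ]; ring
  simpa using (((tendsto_pow_atTop_nhds_zero_of_norm_lt_one hq).neg.div
    (by simpa using tendsto_one_sub_mul_pow_succ hq 1) one_ne_zero).mul_const w)

lemma summable_norm_heineCoeff_mul_pow (hq : ‖q‖ < 1) (y : 𝕜) (hz : ‖z‖ < 1) :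
    Summable fun n => ‖heineCoeff y q n * z ^ n‖ := by
  refine summable_norm_of_ratio_tendsto
    (ρ := fun n => z / ((1 - q ^ (n + 1)) * (1 - y * q ^ (n + 1)))) hz ?_
    fun n => by rw [heineCoeff_succ, pow_succ]; ring
  have hq1 : Tendsto (fun n => 1 - q ^ (n + 1)) atTop (𝓝 1) := by
    simpa using tendsto_one_sub_mul_pow_succ hq 1
  simpa [div_eq_mul_inv] using
    ((hq1.mul (tendsto_one_sub_mul_pow_succ hq y)).inv₀ (by simp)).const_mul z

variable [CompleteSpace 𝕜]

lemma tsum_eulerCoeff_mul_pow_eq_one_sub_mul (hq : ‖q‖ < 1) (w : 𝕜) :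
    ∑' k, eulerCoeff q k * w ^ k = (1 - w) * ∑' k, eulerCoeff q k * (q * w) ^ k := by
  have hf := (summable_norm_eulerCoeff_mul_pow hq w).of_norm
  have hg := (summable_norm_eulerCoeff_mul_pow hq (q * w)).of_norm
  have hdiff : ∑' k, (eulerCoeff q k * w ^ k - eulerCoeff q k * (q * w) ^ k) =
      -w * ∑' k, eulerCoeff q k * (q * w) ^ k := by
    rw [(hf.sub hg).tsum_eq_zero_add, ← tsum_mul_left]
    simp only [pow_zero, sub_self, zero_add]
    refine tsum_congr fun k => ?_
    linear_combination w ^ (k + 1) * eulerCoeff_succ_mul_one_sub (pow_succ_ne_one hq k)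
  rw [hf.tsum_sub hg] at hdiff
  linear_combination hdiff

lemma tsum_eulerCoeff_mul_pow_eq_prod_mul (hq : ‖q‖ < 1) (z : 𝕜) (N : ℕ) :
    ∑' k, eulerCoeff q k * z ^ k =
      (∏ j ∈ range N, (1 - z * q ^ j)) * ∑' k, eulerCoeff q k * (q ^ N * z) ^ k := by
  induction N with
  | zero => simp
  | succ N ih =>
    rw [ih, tsum_eulerCoeff_mul_pow_eq_one_sub_mul hq, prod_range_succ, ← mul_assoc, pow_succ',
      mul_assoc q]
    ring

lemma tendsto_tsum_eulerCoeff_mul_pow_mul (hq : ‖q‖ < 1) (z : 𝕜) :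
    Tendsto (fun N => ∑' k, eulerCoeff q k * (q ^ N * z) ^ k) atTop (𝓝 1) := by
  have hlim : ∑' k, eulerCoeff q k * (0 : 𝕜) ^ k = 1 := by
    rw [tsum_eq_single 0 fun k hk => by simp [hk], pow_zero, mul_one, eulerCoeff_zero]
  rw [← hlim]
  refine tendsto_tsum_of_dominated_convergence (summable_norm_eulerCoeff_mul_pow hq z)
    (fun k => ?_) (Eventually.of_forall fun N k => ?_)
  · have := (((tendsto_pow_atTop_nhds_zero_of_norm_lt_one hq).mul_const z).pow k).const_mul
      (eulerCoeff q k)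
    rwa [zero_mul] at this
  · calc ‖eulerCoeff q k * (q ^ N * z) ^ k‖ = ‖eulerCoeff q k * z ^ k‖ * ‖q‖ ^ (N * k) := by
          rw [mul_pow, pow_mul, norm_mul, norm_mul, norm_mul, norm_pow, norm_pow, norm_pow]
          ring
      _ ≤ ‖eulerCoeff q k * z ^ k‖ :=
          mul_le_of_le_one_right (norm_nonneg _) (pow_le_one₀ (norm_nonneg _) hq.le)

theorem tprod_one_sub_mul_pow (hq : ‖q‖ < 1) (z : 𝕜) :
    ∏' j, (1 - z * q ^ j) = ∑' k, eulerCoeff q k * z ^ k := by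
  have hsum : Summable fun j => ‖-(z * q ^ j)‖ := by
    simpa [norm_mul, norm_pow] using
      (summable_geometric_of_lt_one (norm_nonneg q) hq).mul_left ‖z‖
  have hprod := (multipliable_one_add_of_summable hsum).hasProd.tendsto_prod_nat
  simp only [← sub_eq_add_neg] at hprod
  have hlim := hprod.mul (tendsto_tsum_eulerCoeff_mul_pow_mul hq z)
  rw [mul_one] at hlim
  refine tendsto_nhds_unique hlim ?_
  simp only [← tsum_eulerCoeff_mul_pow_eq_prod_mul hq z]
  exact tendsto_const_nhds

lemma tsum_coeff_mul_pow_mul_tsum (f g : 𝕜⟦X⟧) (hf : Summable fun n => ‖coeff n f * z ^ n‖)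
    (hg : Summable fun n => ‖coeff n g * z ^ n‖) :
    (∑' n, coeff n f * z ^ n) * ∑' n, coeff n g * z ^ n = ∑' n, coeff n (f * g) * z ^ n := by
  rw [tsum_mul_tsum_eq_tsum_sum_antidiagonal_of_summable_norm hf hg]
  refine tsum_congr fun n => ?_
  rw [coeff_mul, sum_mul]
  refine sum_congr rfl fun kl hkl => ?_
  rw [← mem_antidiagonal.1 hkl, pow_add]
  ring

end Analytic

end HeineLimit

open HeineLimit PowerSeries

/-- `(z;q)_∞ Σ_{n≥0} z^n / ((q;q)_n (yq;q)_n) = Σ_{n≥0} y^n z^n q^{n²} / ((yq;q)_n (q;q)_n)`,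
a limiting case of Heine's transformation. -/
theorem heine_limit (y z q : ℂ) (hq : ‖q‖ < 1) (hz : ‖z‖ < 1) (hy : ‖y‖ < 1) :
    (∏' j : ℕ, (1 - z * q ^ j)) *
      (∑' n : ℕ, z ^ n /
        ((∏ j ∈ Finset.range n, (1 - q ^ (j + 1))) *
          ∏ j ∈ Finset.range n, (1 - y * q ^ (j + 1)))) =
      ∑' n : ℕ, y ^ n * z ^ n * q ^ (n ^ 2) /
        ((∏ j ∈ Finset.range n, (1 - y * q ^ (j + 1))) *
          ∏ j ∈ Finset.range n, (1 - q ^ (j + 1))) := by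
  have hcoeff (n : ℕ) : coeff n (eulerSeries q * heineSeries y q) * z ^ n =
      y ^ n * z ^ n * q ^ (n ^ 2) / ((∏ j ∈ Finset.range n, (1 - y * q ^ (j + 1))) *
        ∏ j ∈ Finset.range n, (1 - q ^ (j + 1))) := by
    rw [coeff_eulerSeries_mul_heineSeries (pow_succ_ne_one hq) (mul_pow_succ_ne_one hy.le hq)]
    simp only [heineCoeff, qPoch, one_mul]
    ring
  calc _ = (∑' k, coeff k (eulerSeries q) * z ^ k) *
        ∑' n, coeff n (heineSeries y q) * z ^ n := by
        simp only [tprod_one_sub_mul_pow hq z, eulerSeries, heineSeries, coeff_mk,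
          heineCoeff, qPoch, one_mul, div_eq_inv_mul (z ^ _)]
    _ = ∑' n, coeff n (eulerSeries q * heineSeries y q) * z ^ n := by
        apply tsum_coeff_mul_pow_mul_tsum
        · simpa [eulerSeries] using summable_norm_eulerCoeff_mul_pow hq z
        · simpa [heineSeries] using summable_norm_heineCoeff_mul_pow hq y hz
    _ = _ := tsum_congr hcoeff
end

section
/- For |q|<1: Σ_{n≥0} (−1;q)_n q^{n(n+1)/2} / (q;q)_n = (−q;q)_∞ (−q;q²)_∞. -/
/-!
By the finite `q`-binomial theorem, `(-1;q)_n / (q;q)_n = ∑_{k+m=n} q^(k(k-1)/2) / ((q;q)_k (q;q)_m)`,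
so the left side is a double series over `(k, m)`, absolutely convergent for `‖q‖ < 1`. Summing
over `m` first with Euler's identity `∑_m z^m q^(m(m-1)/2) / (q;q)_m = (-z;q)_∞` at `z = q^(k+1)`
gives `(-q;q)_∞ q^(k²) / (q²;q²)_k`, since `(-q^(k+1);q)_∞ = (-q;q)_∞ / (-q;q)_k` and
`(q;q)_k (-q;q)_k = (q²;q²)_k`; the sum over `k` is then Euler's identity in base `q²` at `z = q`.
Euler's identity itself follows from the functional equation `E(z) = (1 + z) E(zq)` of its left
side `E`, iterated to `E(z) = (-z;q)_N E(zq^N)`, and from `E(zq^N) → E(0) = 1`.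
-/

open Finset

lemma mul_succ_div_two_eq_choose_two (n : ℕ) : n * (n + 1) / 2 = (n + 1).choose 2 := by
  rw [Nat.choose_two_right, Nat.add_sub_cancel, mul_comm]

lemma choose_two_add_choose_two_add_succ (k m : ℕ) :
    k.choose 2 + (k + m + 1).choose 2 = k * k + (k + 1) * m + m.choose 2 := by
  apply Nat.cast_injective (R := ℚ)
  push_cast [Nat.cast_choose_two]
  ring

lemma mul_self_eq_add_two_mul_choose_two (k : ℕ) : k * k = k + 2 * k.choose 2 := by
  apply Nat.cast_injective (R := ℚ)
  push_cast [Nat.cast_choose_two]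
  ring

section Algebra

variable {K : Type*} [Field K]

def qPochhammer (a q : K) (n : ℕ) : K := ∏ j ∈ range n, (1 - a * q ^ j)

@[simp]
lemma qPochhammer_zero (a q : K) : qPochhammer a q 0 = 1 := prod_range_zero _

lemma qPochhammer_succ (a q : K) (n : ℕ) :
    qPochhammer a q (n + 1) = qPochhammer a q n * (1 - a * q ^ n) :=
  prod_range_succ _ _

lemma qPochhammer_succ' (a q : K) (n : ℕ) :
    qPochhammer a q (n + 1) = (1 - a) * qPochhammer (a * q) q n := by
  simp only [qPochhammer, prod_range_succ', pow_zero, mul_one, pow_succ', mul_assoc]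
  ring

lemma qPochhammer_self (q : K) (n : ℕ) :
    qPochhammer q q n = ∏ j ∈ range n, (1 - q ^ (j + 1)) := by
  simp only [qPochhammer, pow_succ']

lemma qPochhammer_neg (z q : K) (n : ℕ) :
    qPochhammer (-z) q n = ∏ j ∈ range n, (1 + z * q ^ j) := by
  simp only [qPochhammer, neg_mul, sub_neg_eq_add]

lemma qPochhammer_self_mul_neg (q : K) (n : ℕ) :
    qPochhammer q q n * qPochhammer (-q) q n = qPochhammer (q ^ 2) (q ^ 2) n := by
  simp only [qPochhammer, ← prod_mul_distrib, ← pow_mul]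
  exact prod_congr rfl fun j _ => by ring

lemma one_sub_pow_succ_ne_zero {q : K} (hq : ∀ n, qPochhammer q q n ≠ 0) (n : ℕ) :
    1 - q ^ (n + 1) ≠ 0 := by
  rw [pow_succ']
  exact right_ne_zero_of_mul (qPochhammer_succ q q n ▸ hq (n + 1))

lemma one_sub_pow_mul_sum_antidiagonal_succ {q : K} (hq : ∀ n, qPochhammer q q n ≠ 0)
    (z : K) (N : ℕ) :
    (1 - q ^ (N + 1)) * ∑ p ∈ antidiagonal (N + 1),
        z ^ p.1 * q ^ p.1.choose 2 / (qPochhammer q q p.1 * qPochhammer q q p.2) =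
      (1 + z) * ∑ p ∈ antidiagonal N,
        (z * q) ^ p.1 * q ^ p.1.choose 2 / (qPochhammer q q p.1 * qPochhammer q q p.2) := by
  set t : ℕ × ℕ → K := fun p =>
    z ^ p.1 * q ^ p.1.choose 2 / (qPochhammer q q p.1 * qPochhammer q q p.2)
  -- Split `1 - q ^ (k + m) = (1 - q ^ k) + q ^ k * (1 - q ^ m)`: in each resulting sum the
  -- boundary term vanishes and the other factor cancels against `(q;q)_k` resp. `(q;q)_m`.
  have hsplit : (1 - q ^ (N + 1)) * ∑ p ∈ antidiagonal (N + 1), t p =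
      ∑ p ∈ antidiagonal (N + 1), t p * (1 - q ^ p.1) +
        ∑ p ∈ antidiagonal (N + 1), t p * (q ^ p.1 * (1 - q ^ p.2)) := by
    rw [mul_sum, ← sum_add_distrib]
    refine sum_congr rfl fun p hp => ?_
    rw [← mem_antidiagonal.1 hp, pow_add]
    ring
  rw [hsplit, Nat.sum_antidiagonal_succ, Nat.sum_antidiagonal_succ', add_comm 1 z, add_mul,
    mul_sum]
  simp only [pow_zero, sub_self, mul_zero, zero_add, one_mul]
  congr 1
  · refine sum_congr rfl fun p _ => ?_
    have := one_sub_pow_succ_ne_zero hq p.1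
    simp only [t, qPochhammer_succ, Nat.choose_succ_succ', Nat.choose_one_right, ← pow_succ']
    field_simp [hq p.1, hq p.2]
    ring
  · refine sum_congr rfl fun p _ => ?_
    have := one_sub_pow_succ_ne_zero hq p.2
    simp only [t, qPochhammer_succ, ← pow_succ']
    field_simp [hq p.1, hq p.2]
    ring

theorem qPochhammer_neg_div_eq_sum_antidiagonal {q : K} (hq : ∀ n, qPochhammer q q n ≠ 0)
    (z : K) (N : ℕ) :
    qPochhammer (-z) q N / qPochhammer q q N = ∑ p ∈ antidiagonal N,
        z ^ p.1 * q ^ p.1.choose 2 / (qPochhammer q q p.1 * qPochhammer q q p.2) := by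
  induction N generalizing z with
  | zero => simp
  | succ N ih =>
    have h := one_sub_pow_succ_ne_zero hq N
    rw [← mul_right_inj' h, one_sub_pow_mul_sum_antidiagonal_succ hq, ← ih, qPochhammer_succ',
      qPochhammer_succ, pow_succ', neg_mul]
    rw [pow_succ'] at h
    field_simp [hq N]
    ring

lemma eulerSeries_term_succ (q z : K) (m : ℕ) :
    z ^ (m + 1) * q ^ (m + 1).choose 2 / qPochhammer q q (m + 1) =
      z ^ m * q ^ m.choose 2 / qPochhammer q q m * (z * q ^ m / (1 - q * q ^ m)) := by
  rw [qPochhammer_succ, Nat.choose_succ_succ', Nat.choose_one_right, div_mul_div_comm]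
  ring

end Algebra

theorem HasSum.sum_antidiagonal {A α : Type*} [AddMonoid A] [HasAntidiagonal A]
    [AddCommMonoid α] [TopologicalSpace α] [ContinuousAdd α] [RegularSpace α]
    {f : A × A → α} {a : α} (h : HasSum f a) :
    HasSum (fun n => ∑ p ∈ antidiagonal n, f p) a := by
  refine (HasAntidiagonal.sigmaAntidiagonalEquivProd.hasSum_iff.2 h).sigma fun n => ?_
  rw [← sum_coe_sort]
  exact hasSum_fintype _

open Filter Topology Metric

section Analysis

variable {𝕜 : Type*} [NormedField 𝕜]

lemma qPochhammer_ne_zero {a q : 𝕜} (ha : ‖a‖ < 1) (hq : ‖q‖ ≤ 1) (n : ℕ) :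
    qPochhammer a q n ≠ 0 := by
  refine prod_ne_zero_iff.2 fun j _ => sub_ne_zero.2 fun h => ?_
  have : ‖a * q ^ j‖ < 1 := by
    rw [norm_mul, norm_pow]
    exact mul_lt_one_of_nonneg_of_lt_one_left (norm_nonneg a) ha (pow_le_one₀ (norm_nonneg q) hq)
  rw [← h, norm_one] at this
  exact this.false

variable {q : 𝕜}

noncomputable def eulerSeries (q z : 𝕜) : 𝕜 := ∑' m : ℕ, z ^ m * q ^ m.choose 2 / qPochhammer q q m

lemma summable_norm_eulerSeries (hq : ‖q‖ < 1) (z : 𝕜) :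
    Summable fun m => ‖z ^ m * q ^ m.choose 2 / qPochhammer q q m‖ := by
  have hpos : 0 < 1 - ‖q‖ := sub_pos.2 hq
  have hratio : Tendsto (fun m => ‖z‖ * ‖q‖ ^ m / (1 - ‖q‖)) atTop (𝓝 0) := by
    simpa using ((tendsto_pow_atTop_nhds_zero_of_lt_one (norm_nonneg q) hq).const_mul ‖z‖).div_const
      (1 - ‖q‖)
  refine summable_of_ratio_norm_eventually_le (r := 1 / 2) (by norm_num) ?_
  filter_upwards [hratio.eventually_le_const (by norm_num : (0 : ℝ) < 1 / 2)] with m hm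
  have hden : 1 - ‖q‖ ≤ ‖1 - q * q ^ m‖ := by
    have : ‖q * q ^ m‖ ≤ ‖q‖ := by
      rw [norm_mul, norm_pow]
      exact mul_le_of_le_one_right (norm_nonneg q) (pow_le_one₀ (norm_nonneg q) hq.le)
    linarith [norm_sub_norm_le (1 : 𝕜) (q * q ^ m), norm_one (α := 𝕜)]
  rw [norm_norm, norm_norm, eulerSeries_term_succ, norm_mul, mul_comm]
  gcongr
  rw [norm_div, norm_mul, norm_pow]
  exact (div_le_div_of_nonneg_left (by positivity) hpos hden).trans hm

variable [CompleteSpace 𝕜]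

lemma hasSum_eulerSeries (hq : ‖q‖ < 1) (z : 𝕜) :
    HasSum (fun m => z ^ m * q ^ m.choose 2 / qPochhammer q q m) (eulerSeries q z) :=
  (summable_norm_eulerSeries hq z).of_norm.hasSum

lemma eulerSeries_eq_one_add_mul (hq : ‖q‖ < 1) (z : 𝕜) :
    eulerSeries q z = (1 + z) * eulerSeries q (z * q) := by
  have hdiff := (hasSum_eulerSeries hq z).sub (hasSum_eulerSeries hq (z * q))
  rw [← hasSum_nat_add_iff' 1] at hdiff
  simp only [range_one, sum_singleton, pow_zero, one_mul, sub_self, sub_zero] at hdiff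
  have hterm : ∀ m, z ^ (m + 1) * q ^ (m + 1).choose 2 / qPochhammer q q (m + 1) -
      (z * q) ^ (m + 1) * q ^ (m + 1).choose 2 / qPochhammer q q (m + 1) =
        z * ((z * q) ^ m * q ^ m.choose 2 / qPochhammer q q m) := fun m => by
    have := one_sub_pow_succ_ne_zero (fun n => qPochhammer_ne_zero hq hq.le n) m
    rw [pow_succ'] at this
    rw [qPochhammer_succ, Nat.choose_succ_succ', Nat.choose_one_right]
    field_simp [qPochhammer_ne_zero hq hq.le m]
    ring
  simp only [hterm] at hdiff
  linear_combination hdiff.unique ((hasSum_eulerSeries hq (z * q)).mul_left z)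

lemma eulerSeries_eq_qPochhammer_mul (hq : ‖q‖ < 1) (z : 𝕜) (N : ℕ) :
    eulerSeries q z = qPochhammer (-z) q N * eulerSeries q (z * q ^ N) := by
  induction N with
  | zero => simp
  | succ N ih =>
    rw [ih, pow_succ, ← mul_assoc, eulerSeries_eq_one_add_mul hq (z * q ^ N), qPochhammer_succ]
    ring

lemma tendsto_eulerSeries_zero (hq : ‖q‖ < 1) : Tendsto (eulerSeries q) (𝓝 0) (𝓝 1) := by
  have hcont : ContinuousOn (eulerSeries q) (closedBall 0 1) := by
    refine continuousOn_tsum (u := fun m => ‖q ^ m.choose 2 / qPochhammer q q m‖)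
      (fun m => by fun_prop) (by simpa using summable_norm_eulerSeries hq 1) fun m w hw => ?_
    rw [mul_div_assoc, norm_mul, norm_pow]
    exact mul_le_of_le_one_left (norm_nonneg _)
      (pow_le_one₀ (norm_nonneg w) (mem_closedBall_zero_iff.1 hw))
  have h0 : eulerSeries q 0 = 1 := by
    rw [eulerSeries, tsum_eq_single 0 fun m hm => by simp [hm]]
    simp
  simpa [h0] using (hcont.continuousAt (closedBall_mem_nhds 0 one_pos)).tendsto

theorem hasProd_eulerSeries (hq : ‖q‖ < 1) (z : 𝕜) :
    HasProd (fun j => 1 + z * q ^ j) (eulerSeries q z) := by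
  have hmul : Multipliable fun j => 1 + z * q ^ j := by
    refine multipliable_one_add_of_summable ?_
    simpa [norm_mul, norm_pow] using (summable_geometric_of_lt_one (norm_nonneg q) hq).mul_left ‖z‖
  have htail : Tendsto (fun N => eulerSeries q (z * q ^ N)) atTop (𝓝 1) := by
    refine (tendsto_eulerSeries_zero hq).comp ?_
    simpa using (tendsto_pow_atTop_nhds_zero_of_norm_lt_one hq).const_mul z
  have hlim := hmul.hasProd.tendsto_prod_nat.mul htail
  simp only [← qPochhammer_neg, ← eulerSeries_eq_qPochhammer_mul hq, mul_one] at hlim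
  rw [tendsto_const_nhds_iff.1 hlim]
  exact hmul.hasProd

theorem hasSum_baileyDaum_neg_one_double (hq : ‖q‖ < 1) :
    HasSum (fun p : ℕ × ℕ => q ^ p.1.choose 2 / (qPochhammer q q p.1 * qPochhammer q q p.2) *
        q ^ (p.1 + p.2 + 1).choose 2) (eulerSeries q q * eulerSeries (q ^ 2) q) := by
  set f : ℕ × ℕ → 𝕜 := fun p =>
    q ^ p.1.choose 2 / (qPochhammer q q p.1 * qPochhammer q q p.2) * q ^ (p.1 + p.2 + 1).choose 2
  have hsummable : Summable f := by
    set a : ℕ → ℝ := fun m => ‖q‖ ^ m.choose 2 / ‖qPochhammer q q m‖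
    have ha : Summable a := by simpa [a] using summable_norm_eulerSeries hq 1
    refine Summable.of_norm_bounded (ha.mul_of_nonneg ha (fun _ => by positivity)
      (fun _ => by positivity)) fun ⟨k, m⟩ => ?_
    have hexp : ‖q‖ ^ (k + m + 1).choose 2 ≤ ‖q‖ ^ m.choose 2 :=
      pow_le_pow_of_le_one (norm_nonneg q) hq.le (Nat.choose_le_choose 2 (by omega))
    calc ‖f (k, m)‖ = a k * (‖q‖ ^ (k + m + 1).choose 2 / ‖qPochhammer q q m‖) := by
          simp only [f, a, norm_mul, norm_div, norm_pow]
          ring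
      _ ≤ a k * a m := by gcongr; exact div_le_div_of_nonneg_right hexp (norm_nonneg _)
  have hinner : ∀ k, HasSum (fun m => f (k, m))
      (eulerSeries q q * (q ^ k * (q ^ 2) ^ k.choose 2 / qPochhammer (q ^ 2) (q ^ 2) k)) := by
    intro k
    have hterm : ∀ m, f (k, m) =
        q ^ (k * k) / qPochhammer q q k * ((q ^ (k + 1)) ^ m * q ^ m.choose 2 / qPochhammer q q m) :=
      fun m => by
        simp only [f]
        rw [div_mul_eq_mul_div, ← pow_add, choose_two_add_choose_two_add_succ, pow_add, pow_add,
          pow_mul]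
        ring
    have hval : q ^ (k * k) / qPochhammer q q k * eulerSeries q (q ^ (k + 1)) =
        eulerSeries q q * (q ^ k * (q ^ 2) ^ k.choose 2 / qPochhammer (q ^ 2) (q ^ 2) k) := by
      have hneg : qPochhammer (-q) q k ≠ 0 := qPochhammer_ne_zero (by rwa [norm_neg]) hq.le k
      rw [eulerSeries_eq_qPochhammer_mul hq q k, ← qPochhammer_self_mul_neg, pow_succ',
        mul_self_eq_add_two_mul_choose_two, pow_add, pow_mul]
      field_simp [qPochhammer_ne_zero hq hq.le k]
    rw [show (fun m => f (k, m)) = _ from funext hterm, ← hval]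
    exact (hasSum_eulerSeries hq (q ^ (k + 1))).mul_left _
  have hq2 : ‖q ^ 2‖ < 1 := by rw [norm_pow]; exact pow_lt_one₀ (norm_nonneg q) hq two_ne_zero
  have houter := (hasSum_eulerSeries hq2 q).mul_left (eulerSeries q q)
  rw [← (hsummable.hasSum.prod_fiberwise hinner).unique houter]
  exact hsummable.hasSum

/-- `Σ_{n≥0} (−1;q)_n q^{n(n+1)/2} / (q;q)_n = (−q;q)_∞ (−q;q²)_∞`. -/
theorem bailey_daum_neg_one (q : ℂ) (hq : ‖q‖ < 1) :
    (∑' n : ℕ, (∏ j ∈ Finset.range n, (1 - (-1 : ℂ) * q ^ j)) * q ^ (n * (n + 1) / 2) /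
        ∏ j ∈ Finset.range n, (1 - q ^ (j + 1))) =
      (∏' j : ℕ, (1 + q ^ (j + 1))) * ∏' j : ℕ, (1 + q ^ (2 * j + 1)) := by
  have hq2 : ‖q ^ 2‖ < 1 := by rw [norm_pow]; exact pow_lt_one₀ (norm_nonneg q) hq two_ne_zero
  have hterm : ∀ n : ℕ,
      (∏ j ∈ range n, (1 - (-1 : ℂ) * q ^ j)) * q ^ (n * (n + 1) / 2) /
          ∏ j ∈ range n, (1 - q ^ (j + 1)) =
        ∑ p ∈ antidiagonal n, q ^ p.1.choose 2 / (qPochhammer q q p.1 * qPochhammer q q p.2) *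
          q ^ (p.1 + p.2 + 1).choose 2 := fun n => by
    change qPochhammer (-1) q n * _ / _ = _
    rw [← qPochhammer_self, mul_div_right_comm, qPochhammer_neg_div_eq_sum_antidiagonal (qPochhammer_ne_zero hq hq.le) 1 n, sum_mul,
      mul_succ_div_two_eq_choose_two]
    refine sum_congr rfl fun p hp => ?_
    rw [mem_antidiagonal.1 hp, one_pow, one_mul]
  rw [tsum_congr hterm, (hasSum_baileyDaum_neg_one_double hq).sum_antidiagonal.tsum_eq,
    ← (hasProd_eulerSeries hq q).tprod_eq, ← (hasProd_eulerSeries hq2 q).tprod_eq]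
  congr 1 <;> exact tprod_congr fun j => by ring
end Analysis
end

section
/- Suppose the formal power series T(y) = Σ_{n≥0} t(n) y^n (coefficients in the ring of formal power series in q and z) satisfies (1+yq)T(y) − T(yq) = yzq·T(yq^k) with t(0)=1, for a positive integer k. Then t(n) = (−1)^n q^n (z;q^k)_n / (q;q)_n for all n ≥ 0. -/
/-!
Comparing coefficients of `y^(n+1)` turns the q-difference equation into the first-order
recurrence `(1 - q^(n+1)) t(n+1) = -q (1 - z q^(kn)) t(n)`, which telescopes to
`t(n) (q;q)_n = (-q)^n (z;q^k)_n`; and `(q;q)_n` is invertible in `ℚ⟦q, z⟧` because its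
constant term is `1`.
-/

open scoped BigOperators

noncomputable def qv : MvPowerSeries (Fin 2) ℚ := MvPowerSeries.X 0

noncomputable def zv : MvPowerSeries (Fin 2) ℚ := MvPowerSeries.X 1

open PowerSeries in
theorem one_sub_pow_succ_mul_eq_of_qDifference {R : Type*} [CommRing R] {q z : R} {k : ℕ}
    {t : ℕ → R}
    (h : (1 + C q * X) * mk t - mk (fun n => q ^ n * t n) =
      C (z * q) * X * mk (fun n => q ^ (k * n) * t n)) (n : ℕ) :
    (1 - q ^ (n + 1)) * t (n + 1) = -q * (1 - z * q ^ (k * n)) * t n := by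
  have h := congrArg (coeff (n + 1)) h
  simp only [map_sub, add_mul, one_mul, map_add, coeff_mk, mul_assoc, coeff_C_mul,
    coeff_succ_X_mul] at h
  linear_combination h

open Finset in
theorem mul_prod_range_eq_of_mul_succ_eq {M : Type*} [CommMonoid M] {a b t : ℕ → M}
    (h : ∀ n, a n * t (n + 1) = b n * t n) (n : ℕ) :
    t n * ∏ j ∈ range n, a j = t 0 * ∏ j ∈ range n, b j := by
  induction n with
  | zero => simp
  | succ n ih =>
    calc t (n + 1) * ∏ j ∈ range (n + 1), a j
        = (a n * t (n + 1)) * ∏ j ∈ range n, a j := by rw [prod_range_succ]; ac_rfl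
      _ = b n * (t n * ∏ j ∈ range n, a j) := by rw [h]; ac_rfl
      _ = t 0 * ∏ j ∈ range (n + 1), b j := by rw [ih, prod_range_succ]; ac_rfl

theorem solve_q_difference_distincts_general (k : ℕ)
    (t : ℕ → MvPowerSeries (Fin 2) ℚ) (h0 : t 0 = 1)
    (hrec : (1 + PowerSeries.C (R := MvPowerSeries (Fin 2) ℚ) qv * PowerSeries.X) *
          PowerSeries.mk t -
        PowerSeries.mk (fun n => qv ^ n * t n) =
      PowerSeries.C (R := MvPowerSeries (Fin 2) ℚ) (zv * qv) * PowerSeries.X *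
        PowerSeries.mk (fun n => qv ^ (k * n) * t n)) :
    ∀ n : ℕ, t n = (-1) ^ n * qv ^ n *
      (∏ j ∈ Finset.range n, (1 - zv * qv ^ (k * j))) *
      (∏ j ∈ Finset.range n, (1 - qv ^ (j + 1)))⁻¹ := by
  intro n
  have hstep := one_sub_pow_succ_mul_eq_of_qDifference hrec
  have hunit : MvPowerSeries.constantCoeff
      (∏ j ∈ Finset.range n, (1 - qv ^ (j + 1))) ≠ 0 := by
    simp [qv]
  rw [MvPowerSeries.eq_mul_inv_iff_mul_eq hunit, mul_prod_range_eq_of_mul_succ_eq hstep, h0,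
    one_mul, Finset.prod_mul_distrib, Finset.prod_const, Finset.card_range, neg_pow',
    mul_comm ((-1) ^ n)]

/-- If `T(y) = Σ t(n) yⁿ` (coefficients formal power series in `q, z`) satisfies
`(1+yq)T(y) − T(yq) = yzq·T(yq^k)` and `t(0) = 1`, then
`t(n) = (−1)^n q^n (z;q^k)_n / (q;q)_n`. -/
theorem solve_q_difference_distincts (k : ℕ) (hk : 0 < k)
    (t : ℕ → MvPowerSeries (Fin 2) ℚ) (h0 : t 0 = 1)
    (hrec : (1 + PowerSeries.C (R := MvPowerSeries (Fin 2) ℚ) qv * PowerSeries.X) *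
          PowerSeries.mk t -
        PowerSeries.mk (fun n => qv ^ n * t n) =
      PowerSeries.C (R := MvPowerSeries (Fin 2) ℚ) (zv * qv) * PowerSeries.X *
        PowerSeries.mk (fun n => qv ^ (k * n) * t n)) :
    ∀ n : ℕ, t n = (-1) ^ n * qv ^ n *
      (∏ j ∈ Finset.range n, (1 - zv * qv ^ (k * j))) *
      (∏ j ∈ Finset.range n, (1 - qv ^ (j + 1)))⁻¹ :=
  solve_q_difference_distincts_general k t h0 hrec
end
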